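/- For a graph G on n labelled vertices, let B_0(G) = { j : V → {0,1} | there exists a vertex k such that j(k') = 0 for all neighbors k' of k }. If G is drawn from the Erdős–Rényi model G(n,p), then E_G[ 2^{−n}·|B_0(G)| ] ≤ 2^{−n} + R(n,p), where R(n,p) = ∑_{s=1}^{n} C(n,s)·2^{−n}·min(1, n·(1−p)^{s−1}). Equivalently, E_G[|B_0(G)|] ≤ 1 + ∑_{s=1}^{n} C(n,s)·min(1, n·(1−p)^{s−1}). -/
import Mathlib


open scoped Classical
open Finset

/-- Best-response tables of a game with `n` binary-strategy players: player `v`'s table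
assigns a best response `ω v τ ∈ {0,1}` to each (masked) strategy profile `τ`.
Only the values at profiles vanishing outside the neighborhood of `v` are ever read,
so under the uniform measure the read entries are i.i.d. uniform on `{0,1}`. -/
abbrev Tables (n : ℕ) := Fin n → (Fin n → Bool) → Bool

/-- Potential edges of a graph on `Fin n`: ordered pairs `(u,v)` with `u < v`. -/
abbrev EdgePair (n : ℕ) := {q : Fin n × Fin n // q.1 < q.2}

/-- A sample of the Erdős–Rényi graph: an indicator of presence for each potential edge. -/
abbrev GraphSeed (n : ℕ) := EdgePair n → Bool

/-- Adjacency relation of the graph determined by a graph seed. -/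
def adjB {n : ℕ} (g : GraphSeed n) (u v : Fin n) : Bool :=
  if h : u < v then g ⟨(u, v), h⟩
  else if h' : v < u then g ⟨(v, u), h'⟩
  else false

/-- Restriction of a strategy profile to the neighborhood of `v`
(strategies outside the neighborhood are replaced by `false`). -/
def maskG {n : ℕ} (g : GraphSeed n) (v : Fin n) (σ : Fin n → Bool) : Fin n → Bool :=
  fun u => if adjB g v u then σ u else false

/-- `σ` is a pure Nash equilibrium of the game on graph `g` with tables `ω`:
every player plays a best response to its neighborhood. -/
def isPNE {n : ℕ} (g : GraphSeed n) (ω : Tables n) (σ : Fin n → Bool) : Prop :=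
  ∀ v, σ v = ω v (maskG g v σ)

/-- Erdős–Rényi weight of a graph seed: each potential edge is present independently
with probability `p`. -/
noncomputable def graphWeight {n : ℕ} (p : ℝ) (g : GraphSeed n) : ℝ :=
  ∏ e : EdgePair n, if g e then p else 1 - p

/-- Probability of a table event under the uniform measure on best-response tables. -/
noncomputable def probT (n : ℕ) (A : Tables n → Prop) : ℝ :=
  (∑ ω : Tables n, if A ω then (1 : ℝ) else 0) / (Fintype.card (Tables n) : ℝ)

/-- Joint probability of an event under the random `G(n,p)`-game measure `P_{(n,p)}`:
first draw `g ~ G(n,p)`, then independent uniform best-response tables `ω`. -/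
noncomputable def probGT (n : ℕ) (p : ℝ) (A : GraphSeed n → Tables n → Prop) : ℝ :=
  ∑ g : GraphSeed n, graphWeight p g * probT n (fun ω => A g ω)

/-- Expectation of a functional of the random graph under `G(n,p)`. -/
noncomputable def expG (n : ℕ) (p : ℝ) (f : GraphSeed n → ℝ) : ℝ :=
  ∑ g : GraphSeed n, graphWeight p g * f g

/-- `R(n,p) = ∑_{s=1}^n C(n,s) 2^{-n} min(1, n(1-p)^{s-1})`. -/
noncomputable def Rfun (n : ℕ) (p : ℝ) : ℝ :=
  ∑ s ∈ Finset.Icc 1 n,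
    (n.choose s : ℝ) / 2 ^ n * min 1 ((n : ℝ) * (1 - p) ^ (s - 1))

open Finset in
lemma gw_nonneg {n : ℕ} {p : ℝ} (hp0 : 0 ≤ p) (hp1 : p ≤ 1) (g : GraphSeed n) :
    0 ≤ graphWeight p g :=
  Finset.prod_nonneg fun e _ => by split <;> linarith

open Finset in
lemma gw_cyl {n : ℕ} {p : ℝ} (E0 : Finset (EdgePair n)) :
    ∑ g : GraphSeed n, graphWeight p g * (if ∀ e ∈ E0, g e = false then 1 else 0)
      = (1 - p) ^ E0.card := by
  have hind : ∀ g : GraphSeed n, (if ∀ e ∈ E0, g e = false then (1:ℝ) else 0)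
      = ∏ e ∈ E0, (if g e = false then (1:ℝ) else 0) := by
    intro g
    by_cases h : ∀ e ∈ E0, g e = false
    · rw [if_pos h, eq_comm, Finset.prod_eq_one]
      intro e he; simp [h e he]
    · push_neg at h
      obtain ⟨e, he, hge⟩ := h
      rw [if_neg (by push_neg; exact ⟨e, he, hge⟩), eq_comm, Finset.prod_eq_zero he]
      simp at hge; simp [hge]
  have key : ∀ g : GraphSeed n, graphWeight p g * (if ∀ e ∈ E0, g e = false then (1:ℝ) else 0)
      = ∏ e : EdgePair n,
          ((if g e then p else 1 - p) * (if e ∈ E0 then (if g e = false then (1:ℝ) else 0) else 1)) := by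
    intro g
    rw [hind, Finset.prod_mul_distrib, graphWeight]
    congr 1
    rw [Finset.prod_ite_mem, Finset.univ_inter]
  simp only [key]
  rw [← Fintype.piFinset_univ, ← Finset.prod_univ_sum (fun _ : EdgePair n => (Finset.univ : Finset Bool))
      (fun e b => (if b then p else 1 - p) * (if e ∈ E0 then (if b = false then (1:ℝ) else 0) else 1))]
  · have : ∀ e : EdgePair n, (∑ b : Bool, (if b then p else 1 - p) * (if e ∈ E0 then (if b = false then (1:ℝ) else 0) else 1)) = if e ∈ E0 then 1 - p else 1 := by
      intro e; by_cases he : e ∈ E0 <;> simp [he]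
    simp only [this]
    rw [Finset.prod_ite_mem, Finset.univ_inter, Finset.prod_const]

open Finset in
lemma gw_sum {n : ℕ} {p : ℝ} : ∑ g : GraphSeed n, graphWeight p g = 1 := by
  simpa using gw_cyl (n := n) (p := p) (∅ : Finset (EdgePair n))
open Finset in
noncomputable def Ezero {n : ℕ} (j : Fin n → Bool) (k : Fin n) : Finset (EdgePair n) :=
  univ.filter (fun e => (e.1.1 = k ∧ j e.1.2 = true) ∨ (e.1.2 = k ∧ j e.1.1 = true))

open Finset in
lemma ev_iff {n : ℕ} (g : GraphSeed n) (j : Fin n → Bool) (k : Fin n) :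
    (∀ k', adjB g k k' = true → j k' = false) ↔ (∀ e ∈ Ezero j k, g e = false) := by
  constructor
  · intro h e he
    rw [Ezero, mem_filter] at he
    rcases he.2 with ⟨h1, h2⟩ | ⟨h1, h2⟩
    · by_contra hg
      rw [Bool.not_eq_false] at hg
      have hadj : adjB g k e.1.2 = true := by
        rw [adjB, dif_pos (h1 ▸ e.2)]
        have he2 : e = ⟨(k, e.1.2), h1 ▸ e.2⟩ := Subtype.ext (Prod.ext h1 rfl)
        rw [← he2]; exact hg
      have := h _ hadj
      simp [h2] at this
    · by_contra hg
      rw [Bool.not_eq_false] at hg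
      have hlt : e.1.1 < k := h1 ▸ e.2
      have hadj : adjB g k e.1.1 = true := by
        rw [adjB, dif_neg (by exact fun hc => absurd (hc.trans hlt) (lt_irrefl k)),
          dif_pos hlt]
        have he2 : e = ⟨(e.1.1, k), hlt⟩ := Subtype.ext (Prod.ext rfl h1)
        rw [← he2]; exact hg
      have := h _ hadj
      simp [h2] at this
  · intro h k' hadj
    rw [adjB] at hadj
    by_contra hj
    rw [Bool.not_eq_false] at hj
    split_ifs at hadj with h1 h2
    · exact absurd (h ⟨(k, k'), h1⟩ (by rw [Ezero, mem_filter]; exact ⟨mem_univ _, Or.inl ⟨rfl, hj⟩⟩)) (by simp [hadj])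
    · exact absurd (h ⟨(k', k), h2⟩ (by rw [Ezero, mem_filter]; exact ⟨mem_univ _, Or.inr ⟨rfl, hj⟩⟩)) (by simp [hadj])

open Finset in
lemma card_Ezero {n : ℕ} (j : Fin n → Bool) (k : Fin n) :
    ((univ.filter fun v => j v = true).card - 1 : ℕ) ≤ (Ezero j k).card := by
  refine le_trans (Finset.pred_card_le_card_erase (a := k))
    (Finset.card_le_card_of_surjOn (fun e => if e.1.1 = k then e.1.2 else e.1.1) ?_)
  intro k' hk'
  simp only [Finset.coe_erase, Set.mem_diff, Finset.mem_coe, mem_filter, mem_univ, true_and,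
    Set.mem_singleton_iff] at hk'
  obtain ⟨hjk', hne⟩ := hk'
  rw [Set.mem_image]
  rcases lt_or_gt_of_ne (Ne.symm hne) with hlt | hgt
  · exact Exists.intro (⟨(k, k'), hlt⟩ : EdgePair n)
      (And.intro (by simp [Ezero, hjk']) (by simp))
  · exact Exists.intro (⟨(k', k), hgt⟩ : EdgePair n)
      (And.intro (by simp [Ezero, hjk']) (by simp [hne]))
open Finset in
lemma pk_bound {n : ℕ} {p : ℝ} (hp0 : 0 ≤ p) (hp1 : p ≤ 1) (j : Fin n → Bool) (k : Fin n) :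
    ∑ g : GraphSeed n, graphWeight p g *
        (if ∀ k', adjB g k k' = true → j k' = false then (1:ℝ) else 0)
      ≤ (1 - p) ^ ((univ.filter fun v => j v = true).card - 1) := by
  have h1 : ∀ g : GraphSeed n, (if ∀ k', adjB g k k' = true → j k' = false then (1:ℝ) else 0)
      = (if ∀ e ∈ Ezero j k, g e = false then (1:ℝ) else 0) := by
    intro g
    by_cases h : ∀ k', adjB g k k' = true → j k' = false
    · rw [if_pos h, if_pos ((ev_iff g j k).mp h)]
    · rw [if_neg h, if_neg (fun hc => h ((ev_iff g j k).mpr hc))]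
  simp only [h1]
  rw [gw_cyl]
  exact pow_le_pow_of_le_one (by linarith) (by linarith) (card_Ezero j k)

open Finset in
lemma Q_le_min {n : ℕ} {p : ℝ} (hp0 : 0 ≤ p) (hp1 : p ≤ 1) (j : Fin n → Bool) :
    ∑ g : GraphSeed n, graphWeight p g *
        (if ∃ k : Fin n, ∀ k', adjB g k k' = true → j k' = false then (1:ℝ) else 0)
      ≤ min 1 ((n : ℝ) * (1 - p) ^ ((univ.filter fun v => j v = true).card - 1)) := by
  refine le_min ?_ ?_
  · have : ∀ g : GraphSeed n, graphWeight p g *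
        (if ∃ k : Fin n, ∀ k', adjB g k k' = true → j k' = false then (1:ℝ) else 0)
        ≤ graphWeight p g := by
      intro g
      have hw := gw_nonneg hp0 hp1 g
      split
      · simp
      · simpa using hw
    exact le_trans (Finset.sum_le_sum fun g _ => this g) (le_of_eq gw_sum)
  · have step : ∀ g : GraphSeed n, graphWeight p g *
        (if ∃ k : Fin n, ∀ k', adjB g k k' = true → j k' = false then (1:ℝ) else 0)
        ≤ ∑ k : Fin n, graphWeight p g *
            (if ∀ k', adjB g k k' = true → j k' = false then (1:ℝ) else 0) := by
      intro g
      have hw := gw_nonneg hp0 hp1 g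
      by_cases h : ∃ k : Fin n, ∀ k', adjB g k k' = true → j k' = false
      · obtain ⟨k0, hk0⟩ := h
        rw [if_pos ⟨k0, hk0⟩, mul_one]
        calc graphWeight p g
            = graphWeight p g *
              (if ∀ k', adjB g k0 k' = true → j k' = false then (1:ℝ) else 0) := by
              rw [if_pos hk0, mul_one]
          _ ≤ ∑ k : Fin n, graphWeight p g *
              (if ∀ k', adjB g k k' = true → j k' = false then (1:ℝ) else 0) :=
              Finset.single_le_sum (f := fun k => graphWeight p g *
                (if ∀ k', adjB g k k' = true → j k' = false then (1:ℝ) else 0))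
                (fun k _ => by positivity) (mem_univ k0)
      · rw [if_neg h, mul_zero]
        refine Finset.sum_nonneg fun k _ => ?_
        positivity
    calc ∑ g : GraphSeed n, graphWeight p g *
            (if ∃ k : Fin n, ∀ k', adjB g k k' = true → j k' = false then (1:ℝ) else 0)
        ≤ ∑ g : GraphSeed n, ∑ k : Fin n, graphWeight p g *
            (if ∀ k', adjB g k k' = true → j k' = false then (1:ℝ) else 0) :=
          Finset.sum_le_sum fun g _ => step g
      _ = ∑ k : Fin n, ∑ g : GraphSeed n, graphWeight p g *
            (if ∀ k', adjB g k k' = true → j k' = false then (1:ℝ) else 0) :=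
          Finset.sum_comm
      _ ≤ ∑ _k : Fin n, (1 - p) ^ ((univ.filter fun v => j v = true).card - 1) :=
          Finset.sum_le_sum fun k _ => pk_bound hp0 hp1 j k
      _ = (n : ℝ) * (1 - p) ^ ((univ.filter fun v => j v = true).card - 1) := by
          rw [Finset.sum_const, nsmul_eq_mul, Finset.card_univ, Fintype.card_fin]
open Finset in
lemma fiber_card {n : ℕ} (s : ℕ) :
    (univ.filter fun j : Fin n → Bool =>
        (univ.filter fun v => j v = true).card = s).card = n.choose s := by
  classical
  have h2 : (Finset.powersetCard s (univ : Finset (Fin n))).card = n.choose s := by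
    rw [Finset.card_powersetCard, Finset.card_univ, Fintype.card_fin]
  rw [← h2]
  refine Finset.card_bij' (fun j _ => univ.filter fun v => j v = true)
    (fun A _ => fun v => decide (v ∈ A)) ?_ ?_ ?_ ?_
  · intro j hj
    rw [Finset.mem_powersetCard]
    exact ⟨Finset.filter_subset _ _ |>.trans (Finset.subset_univ _),
      (Finset.mem_filter.mp hj).2⟩
  · intro A hA
    rw [Finset.mem_filter]
    refine ⟨mem_univ _, ?_⟩
    rw [Finset.mem_powersetCard] at hA
    have hAe : (univ.filter fun v => decide (v ∈ A) = true) = A := by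
      ext v; simp
    rw [hAe, hA.2]
  · intro j hj
    funext v
    simp
  · intro A hA
    ext v
    simp

open Finset in
lemma count_sum {n : ℕ} (F : ℕ → ℝ) :
    ∑ j : Fin n → Bool, F ((univ.filter fun v => j v = true).card)
      = ∑ s ∈ Finset.range (n + 1), (n.choose s : ℝ) * F s := by
  classical
  rw [← Finset.sum_fiberwise_of_maps_to
    (g := fun j : Fin n → Bool => (univ.filter fun v => j v = true).card)
    (t := Finset.range (n + 1))
    (fun j _ => by
      rw [Finset.mem_range, Nat.lt_succ_iff]
      exact le_trans (Finset.card_filter_le _ _) (by simp))]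
  refine Finset.sum_congr rfl fun s hs => ?_
  rw [Finset.sum_congr rfl (fun j hj => by rw [(Finset.mem_filter.mp hj).2]),
    Finset.sum_const, nsmul_eq_mul, fiber_card]
noncomputable def Qfun (n : ℕ) (p : ℝ) (j : Fin n → Bool) : ℝ :=
  ∑ g : GraphSeed n, graphWeight p g *
    (if ∃ k : Fin n, ∀ k', adjB g k k' = true → j k' = false then (1:ℝ) else 0)

open Finset in
lemma Qfun_le_min {n : ℕ} {p : ℝ} (hp0 : 0 ≤ p) (hp1 : p ≤ 1) (j : Fin n → Bool) :
    Qfun n p j ≤ min 1 ((n : ℝ) * (1 - p) ^ ((univ.filter fun v => j v = true).card - 1)) :=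
  Q_le_min hp0 hp1 j


/-- **Expected size of the dependency neighborhood `B₀`.** For `G ~ G(n,p)`,
`E[2^{-n} |B₀(G)|] ≤ 2^{-n} + R(n,p)`, where
`B₀(G) = {j : ∃ vertex k with j(k') = 0 for all neighbors k' of k}`. -/
theorem stmt14 (n : ℕ) (p : ℝ) (hp0 : 0 ≤ p) (hp1 : p ≤ 1) :
    expG n p (fun g =>
        ((2 : ℝ) ^ n)⁻¹ *
          ((univ.filter fun j : Fin n → Bool =>
              ∃ k : Fin n, ∀ k', adjB g k k' = true → j k' = false).card : ℝ)) ≤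
      ((2 : ℝ) ^ n)⁻¹ + Rfun n p := by
  classical
  have hc0 : (0:ℝ) < ((2 : ℝ) ^ n)⁻¹ := by positivity
  set φ : (Fin n → Bool) → ℕ := fun j => (univ.filter fun v => j v = true).card with hφ
  set m : ℕ → ℝ := fun s => min 1 ((n : ℝ) * (1 - p) ^ (s - 1)) with hm
  set F : ℕ → ℝ := fun s => if s = 0 then 0 else m s with hF
  set j0 : Fin n → Bool := fun _ => false with hj0
  have step1 : expG n p (fun g =>
      ((2 : ℝ) ^ n)⁻¹ *
        ((univ.filter fun j : Fin n → Bool =>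
            ∃ k : Fin n, ∀ k', adjB g k k' = true → j k' = false).card : ℝ))
      = ((2 : ℝ) ^ n)⁻¹ * ∑ j : Fin n → Bool, Qfun n p j := by
    unfold expG Qfun
    simp only [Finset.mul_sum]
    rw [Finset.sum_comm]
    refine Finset.sum_congr rfl fun g _ => ?_
    simp only [← Finset.mul_sum]
    rw [Finset.sum_boole]
    ring
  rw [step1]
  -- bound the sum of Qfun
  have hQ0 : Qfun n p j0 ≤ 1 :=
    le_trans (Qfun_le_min hp0 hp1 j0) (min_le_left _ _)
  have hQj : ∀ j : Fin n → Bool, Qfun n p j ≤ m (φ j) := fun j => Qfun_le_min hp0 hp1 j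
  have hφ0 : φ j0 = 0 := by
    simp [hφ, hj0]
  have hφne : ∀ j : Fin n → Bool, j ≠ j0 → φ j ≠ 0 := by
    intro j hne h0
    apply hne
    funext v
    have : (univ.filter fun v => j v = true) = ∅ := Finset.card_eq_zero.mp h0
    have hv : v ∉ (univ.filter fun v => j v = true) := this ▸ Finset.notMem_empty v
    simp only [Finset.mem_filter, Finset.mem_univ, true_and] at hv
    simpa using hv
  have hsum : ∑ j : Fin n → Bool, Qfun n p j
      ≤ 1 + ∑ s ∈ Finset.Icc 1 n, (n.choose s : ℝ) * m s := by
    have e1 : ∑ j : Fin n → Bool, Qfun n p j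
        = Qfun n p j0 + ∑ j ∈ univ.erase j0, Qfun n p j :=
      (Finset.add_sum_erase _ _ (mem_univ j0)).symm
    have e2 : ∑ j ∈ univ.erase j0, Qfun n p j ≤ ∑ j ∈ univ.erase j0, m (φ j) :=
      Finset.sum_le_sum fun j _ => hQj j
    have e3 : ∑ j ∈ univ.erase j0, m (φ j) = ∑ j : Fin n → Bool, F (φ j) := by
      rw [← Finset.add_sum_erase _ (fun j => F (φ j)) (mem_univ j0)]
      rw [hφ0]
      simp only [hF, if_pos rfl, zero_add]
      refine Finset.sum_congr rfl fun j hj => ?_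
      have : φ j ≠ 0 := hφne j (Finset.ne_of_mem_erase hj)
      simp [hF, this]
    have e4 : ∑ j : Fin n → Bool, F (φ j)
        = ∑ s ∈ Finset.Icc 1 n, (n.choose s : ℝ) * m s := by
      rw [count_sum F]
      have hr : Finset.range (n + 1) = insert 0 (Finset.Icc 1 n) := by
        ext x
        simp only [Finset.mem_range, Finset.mem_insert, Finset.mem_Icc]
        omega
      rw [hr, Finset.sum_insert (by simp)]
      simp only [hF, if_pos rfl, mul_zero, zero_add]
      refine Finset.sum_congr rfl fun s hs => ?_
      have : s ≠ 0 := by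
        rw [Finset.mem_Icc] at hs; omega
      simp [this]
    calc ∑ j : Fin n → Bool, Qfun n p j
        = Qfun n p j0 + ∑ j ∈ univ.erase j0, Qfun n p j := e1
      _ ≤ 1 + ∑ j ∈ univ.erase j0, m (φ j) := add_le_add hQ0 e2
      _ = 1 + ∑ s ∈ Finset.Icc 1 n, (n.choose s : ℝ) * m s := by rw [e3, e4]
  have final : ((2 : ℝ) ^ n)⁻¹ * (1 + ∑ s ∈ Finset.Icc 1 n, (n.choose s : ℝ) * m s)
      = ((2 : ℝ) ^ n)⁻¹ + Rfun n p := by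
    rw [mul_add, mul_one, Rfun, Finset.mul_sum]
    congr 1
    refine Finset.sum_congr rfl fun s _ => ?_
    rw [hm, div_eq_mul_inv]
    ring
  calc ((2 : ℝ) ^ n)⁻¹ * ∑ j : Fin n → Bool, Qfun n p j
      ≤ ((2 : ℝ) ^ n)⁻¹ * (1 + ∑ s ∈ Finset.Icc 1 n, (n.choose s : ℝ) * m s) :=
        mul_le_mul_of_nonneg_left hsum (le_of_lt hc0)
    _ = ((2 : ℝ) ^ n)⁻¹ + Rfun n p := final
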